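/- arXiv:math/0703049 — 5 statements merged into one kernel-verified Lean document; each statement's English description precedes it below -/
import Mathlib

section
/- Let (R, m) be a finite commutative local ring with m² ≠ 0. If the zero-divisor graph Γ(R) contains no cycles (in particular, no triangles), then |R/m| = 2. -/
/-!
If the residue field has more than two elements, pick a unit `u` with `u - 1` also a unit.
As `m` is nilpotent and `m² ≠ 0`, there is a nonzero `z ∈ m²` with `z m = 0`; and since a
nonzero proper ideal of a noetherian local ring is not idempotent, there is a `w ∈ m \ m²`.
Then `z`, `u z`, `w` are pairwise distinct with pairwise products zero: a triangle in `Γ(R)`.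
-/

open SimpleGraph

/-- The zero-divisor graph of a commutative ring, defined on the whole ring
(elements that are not nonzero zero-divisors are isolated vertices). -/
def zdg (R : Type*) [CommRing R] : SimpleGraph R where
  Adj x y := x ≠ y ∧ x ≠ 0 ∧ y ≠ 0 ∧ x * y = 0
  symm := ⟨by
    rintro x y ⟨h1, h2, h3, h4⟩
    exact ⟨fun e => h1 e.symm, h3, h2, by rwa [mul_comm]⟩⟩
  loopless := ⟨by rintro x ⟨h1, _⟩; exact h1 rfl⟩

lemma exists_ne_zero_ne_one_of_two_lt_card {M : Type*} [Zero M] [One M] (h : 2 < Nat.card M) :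
    ∃ x : M, x ≠ 0 ∧ x ≠ 1 := by
  by_contra! hc
  have huniv : (Set.univ : Set M) = {0, 1} := by
    ext x
    simpa [or_iff_not_imp_left] using hc x
  have := (Set.ncard_insert_le (0 : M) {1}).trans_eq (by rw [Set.ncard_singleton])
  rw [← huniv, Set.ncard_univ] at this
  omega

namespace IsLocalRing

variable {R : Type*} [CommRing R] [IsLocalRing R]

lemma exists_isUnit_isUnit_sub_one (h : 2 < Nat.card (R ⧸ maximalIdeal R)) :
    ∃ u : R, IsUnit u ∧ IsUnit (u - 1) := by
  obtain ⟨x, hx0, hx1⟩ := exists_ne_zero_ne_one_of_two_lt_card h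
  obtain ⟨u, rfl⟩ := Ideal.Quotient.mk_surjective x
  refine ⟨u, notMem_maximalIdeal.mp fun hu => hx0 ?_, notMem_maximalIdeal.mp fun hu => hx1 ?_⟩
  · exact Ideal.Quotient.eq_zero_iff_mem.mpr hu
  · simpa [sub_eq_zero] using Ideal.Quotient.eq_zero_iff_mem.mpr hu

lemma two_lt_card_residueField [Finite R] (h : Nat.card (R ⧸ maximalIdeal R) ≠ 2) :
    2 < Nat.card (R ⧸ maximalIdeal R) := by
  have : Finite (R ⧸ maximalIdeal R) := Finite.of_surjective _ Ideal.Quotient.mk_surjective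
  have : 1 < Nat.card (R ⧸ maximalIdeal R) := Finite.one_lt_card_iff_nontrivial.mpr inferInstance
  omega

lemma exists_mem_maximalIdeal_notMem_sq [IsNoetherianRing R] (h : maximalIdeal R ^ 2 ≠ ⊥) :
    ∃ w ∈ maximalIdeal R, w ∉ maximalIdeal R ^ 2 := by
  by_contra! hw
  have hidem : IsIdempotentElem (maximalIdeal R) :=
    (sq (maximalIdeal R)).symm.trans (le_antisymm (Ideal.pow_le_self two_ne_zero) hw)
  rcases (Ideal.isIdempotentElem_iff_eq_bot_or_top_of_isLocalRing _).mp hidem with hbot | htop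
  · exact h (by rw [hbot, sq, Ideal.mul_bot])
  · exact (maximalIdeal.isMaximal R).ne_top htop

end IsLocalRing

lemma Ideal.exists_ne_zero_mem_pow_forall_mul_eq_zero {R : Type*} [CommRing R] {I : Ideal R}
    (hI : IsNilpotent I) {k : ℕ} (hk : I ^ k ≠ ⊥) :
    ∃ z ∈ I ^ k, z ≠ 0 ∧ ∀ w ∈ I, z * w = 0 := by
  classical
  have hex : ∃ j, I ^ (k + j + 1) = ⊥ := by
    obtain ⟨n, hn⟩ := hI
    refine ⟨n, le_bot_iff.mp ?_⟩
    rw [← Ideal.zero_eq_bot, ← hn]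
    exact Ideal.pow_le_pow_right (by omega)
  set j := Nat.find hex
  have hj : I ^ (k + j) ≠ ⊥ := by
    intro hbot
    by_cases h0 : j = 0
    · exact hk (by rwa [h0, add_zero] at hbot)
    · refine Nat.find_min hex (show j - 1 < j by omega) ?_
      rwa [show k + (j - 1) + 1 = k + j by omega]
  obtain ⟨z, hz, hz0⟩ := Submodule.exists_mem_ne_zero_of_ne_bot hj
  refine ⟨z, Ideal.pow_le_pow_right (by omega) hz, hz0, fun w hw => ?_⟩
  have : z * w ∈ I ^ (k + j + 1) := pow_succ I (k + j) ▸ Ideal.mul_mem_mul hz hw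
  rwa [Nat.find_spec hex] at this

lemma zdg_not_cliqueFree_three_of_mem_sq {R : Type*} [CommRing R] {I : Ideal R} {z w u : R}
    (hz : z ∈ I ^ 2) (hz0 : z ≠ 0) (hzI : ∀ x ∈ I, z * x = 0)
    (hw : w ∈ I) (hw2 : w ∉ I ^ 2) (hu : IsUnit u) (hu1 : IsUnit (u - 1)) :
    ¬ (zdg R).CliqueFree 3 := by
  classical
  have huz : u * z ∈ I ^ 2 := Ideal.mul_mem_left _ u hz
  have huz0 : u * z ≠ 0 := mt hu.mul_right_eq_zero.mp hz0
  have hzz : z * z = 0 := hzI z (Ideal.pow_le_self two_ne_zero hz)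
  have hne : z ≠ u * z := fun h =>
    hz0 (hu1.mul_right_eq_zero.mp <| by rw [sub_mul, one_mul, ← h, sub_self])
  have hw0 : w ≠ 0 := fun h => hw2 (h ▸ zero_mem _)
  refine fun hfree => hfree {z, u * z, w} <| is3Clique_triple_iff.mpr
    ⟨⟨hne, hz0, huz0, ?_⟩, ⟨?_, hz0, hw0, hzI w hw⟩, ⟨?_, huz0, hw0, ?_⟩⟩
  · rw [mul_left_comm, hzz, mul_zero]
  · rintro rfl; exact hw2 hz
  · rintro h; exact hw2 (h ▸ huz)
  · rw [mul_assoc, hzI w hw, mul_zero]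

/-- Let `(R, m)` be a finite local ring with `m² ≠ 0`. If `Γ(R)` contains no cycles,
then `|R/m| = 2`. -/
theorem stmt_8 (R : Type*) [CommRing R] [IsLocalRing R] [Finite R]
    (hm2 : (IsLocalRing.maximalIdeal R) ^ 2 ≠ ⊥)
    (hacyclic : (zdg R).IsAcyclic) :
    Nat.card (R ⧸ IsLocalRing.maximalIdeal R) = 2 := by
  by_contra hcard
  obtain ⟨u, hu, hu1⟩ :=
    IsLocalRing.exists_isUnit_isUnit_sub_one (IsLocalRing.two_lt_card_residueField hcard)
  have hnil := (isArtinianRing_iff_isNilpotent_maximalIdeal R).mp inferInstance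
  obtain ⟨z, hz, hz0, hzm⟩ :=
    (IsLocalRing.maximalIdeal R).exists_ne_zero_mem_pow_forall_mul_eq_zero hnil hm2
  obtain ⟨w, hw, hw2⟩ := IsLocalRing.exists_mem_maximalIdeal_notMem_sq hm2
  exact zdg_not_cliqueFree_three_of_mem_sq hz hz0 hzm hw hw2 hu hu1 (hacyclic.cliqueFree le_rfl)
end

section
/- Let R ≅ R_1 × R_2 × R_3 × R_4 be a product of four nonzero commutative rings (each with 1). Then K_{3,3} is a subgraph of the zero-divisor graph Γ(R). -/
open SimpleGraph Function

/-! The three nonzero elements `(1, 0), (0, 1), (1, 1)` of `R₁ × R₂` span one side of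
`K_{3,3}` in `(R₁ × R₂) × (R₃ × R₄)`, and their analogues in `R₃ × R₄` the other side:
every element of the form `(x, 0)` annihilates every element of the form `(0, y)`. -/

namespace zdg

def isoOfMulEquiv {R S : Type*} [CommRing R] [CommRing S] (e : R ≃* S) : zdg R ≃g zdg S where
  toEquiv := e.toEquiv
  map_rel_iff' := by simp [zdg, ← map_mul]

variable {α β A B : Type*} [CommRing A] [CommRing B]

lemma adj_inl_inr {x : A} {y : B} (hx : x ≠ 0) (hy : y ≠ 0) :
    (zdg (A × B)).Adj (x, 0) (0, y) :=
  ⟨fun h => hx congr(Prod.fst $h), fun h => hx congr(Prod.fst $h),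
    fun h => hy congr(Prod.snd $h), by simp⟩

lemma exists_injective_hom_completeBipartiteGraph_prod {f : α → A} {g : β → B}
    (hf : Injective f) (hg : Injective g) (hf0 : ∀ a, f a ≠ 0) (hg0 : ∀ b, g b ≠ 0) :
    ∃ φ : completeBipartiteGraph α β →g zdg (A × B), Injective φ := by
  refine ⟨⟨Sum.elim (fun a => (f a, 0)) (fun b => (0, g b)), ?_⟩, ?_⟩
  · rintro (a | b) (a' | b') hab
    · simp at hab
    · exact adj_inl_inr (hf0 a) (hg0 b')
    · exact (adj_inl_inr (hf0 a') (hg0 b)).symm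
    · simp at hab
  · exact ((Prod.mk_left_injective 0).comp hf).sumElim ((Prod.mk_right_injective 0).comp hg)
      fun a b => (adj_inl_inr (hf0 a) (hg0 b)).ne

end zdg

lemma Prod.exists_injective_fin_three_ne_zero (A B : Type*) [CommRing A] [CommRing B]
    [Nontrivial A] [Nontrivial B] :
    ∃ v : Fin 3 → A × B, Injective v ∧ ∀ i, v i ≠ 0 := by
  refine ⟨![(1, 0), (0, 1), (1, 1)], ?_, ?_⟩
  · intro i j h
    fin_cases i <;> fin_cases j <;> simp_all [Prod.ext_iff]
  · intro i
    fin_cases i <;> simp [Prod.ext_iff]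

/-- If `R` is a product of four nonzero commutative rings, then `K_{3,3}` is a subgraph
of `Γ(R)`. -/
theorem stmt_10 (R R₁ R₂ R₃ R₄ : Type*) [CommRing R] [CommRing R₁] [CommRing R₂]
    [CommRing R₃] [CommRing R₄] [Nontrivial R₁] [Nontrivial R₂] [Nontrivial R₃]
    [Nontrivial R₄] (e : R ≃+* R₁ × R₂ × R₃ × R₄) :
    ∃ f : completeBipartiteGraph (Fin 3) (Fin 3) →g zdg R, Injective f := by
  obtain ⟨u, hu, hu0⟩ := Prod.exists_injective_fin_three_ne_zero R₁ R₂
  obtain ⟨v, hv, hv0⟩ := Prod.exists_injective_fin_three_ne_zero R₃ R₄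
  obtain ⟨φ, hφ⟩ := zdg.exists_injective_hom_completeBipartiteGraph_prod hu hv hu0 hv0
  let ψ : zdg ((R₁ × R₂) × R₃ × R₄) ≃g zdg R :=
    zdg.isoOfMulEquiv (MulEquiv.prodAssoc.trans e.symm.toMulEquiv)
  exact ⟨ψ.toHom.comp φ, ψ.injective.comp hφ⟩
end

section
/- Let R be a finite commutative ring and I an ideal with R/I ≅ ℤ/2 × ℤ/2 and |I| = t. Then Γ_I(R) is isomorphic to the complete bipartite graph K_{t,t}. -/
open SimpleGraph

/-- The vertex set of the ideal-based zero-divisor graph `Γ_I(R)`. -/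
def zdvSet (R : Type*) [CommRing R] (I : Ideal R) : Set R :=
  {x | x ∉ I ∧ ∃ y, y ∉ I ∧ x * y ∈ I}

/-- The ideal-based zero-divisor graph `Γ_I(R)` on its vertex set. -/
def GammaI (R : Type*) [CommRing R] (I : Ideal R) : SimpleGraph (zdvSet R I) where
  Adj x y := x ≠ y ∧ (x : R) * y ∈ I
  symm := by
    constructor
    rintro x y ⟨h1, h2⟩
    exact ⟨fun e => h1 e.symm, by rwa [mul_comm]⟩
  loopless := by constructor; rintro x ⟨h1, _⟩; exact h1 rfl

/-!
Let `f : R → 𝔽₂ × 𝔽₂` be the quotient map followed by `e`; it is surjective with kernel `I`.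
So `x` is a vertex of `Γ_I(R)` iff `f x` is a nonzero zero divisor, i.e. `(1, 0)` or `(0, 1)`,
and two vertices are adjacent iff their images differ. The two classes are cosets of `I`, so
each has `t` elements.
-/

namespace SimpleGraph

def isoCompleteBipartiteGraphOfAdjIff {V : Type*} (G : SimpleGraph V) (p : V → Prop)
    [DecidablePred p] (hadj : ∀ u v, G.Adj u v ↔ ¬(p u ↔ p v)) :
    G ≃g completeBipartiteGraph {v // p v} {v // ¬p v} :=
  RelIso.symm
    { toEquiv := Equiv.sumCompl p
      map_rel_iff' := by
        rintro (⟨u, hu⟩ | ⟨u, hu⟩) (⟨v, hv⟩ | ⟨v, hv⟩) <;> simp [hadj, hu, hv] }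

end SimpleGraph

section SurjectiveRingHom

variable {R S : Type*} [CommRing R] [CommRing S] {I : Ideal R} {f : R →+* S}

theorem mem_zdvSet_iff_of_surjective (hf : Function.Surjective f) (hker : RingHom.ker f = I)
    {x : R} : x ∈ zdvSet R I ↔ f x ≠ 0 ∧ ∃ b, b ≠ 0 ∧ f x * b = 0 := by
  subst hker
  simp only [zdvSet, Set.mem_ofPred_eq, RingHom.mem_ker]
  constructor
  · rintro ⟨hx, y, hy, hxy⟩
    exact ⟨hx, f y, hy, by rwa [← map_mul]⟩
  · rintro ⟨hx, b, hb, hxb⟩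
    obtain ⟨y, rfl⟩ := hf b
    exact ⟨hx, y, hb, by rwa [map_mul]⟩

theorem gammaI_adj_iff_of_ker_eq (hker : RingHom.ker f = I) {u v : zdvSet R I} :
    (GammaI R I).Adj u v ↔ u ≠ v ∧ f u * f v = 0 := by
  subst hker
  simp only [GammaI, RingHom.mem_ker, map_mul]

end SurjectiveRingHom

theorem RingHom.natCard_preimage_singleton {R S : Type*} [Ring R] [Ring S] {f : R →+* S}
    (hf : Function.Surjective f) (s : S) : Nat.card (f ⁻¹' {s}) = Nat.card (RingHom.ker f) :=
  Nat.card_congr (AddMonoidHom.fiberEquivKerOfSurjective (f := f.toAddMonoidHom) hf s)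

theorem ZMod.two_prod_ne_zero_and_exists_mul_eq_zero_iff (a : ZMod 2 × ZMod 2) :
    (a ≠ 0 ∧ ∃ b, b ≠ 0 ∧ a * b = 0) ↔ a = (1, 0) ∨ a = (0, 1) := by
  decide +revert

theorem ZMod.two_prod_mul_eq_zero_iff {a b : ZMod 2 × ZMod 2} (ha : a = (1, 0) ∨ a = (0, 1))
    (hb : b = (1, 0) ∨ b = (0, 1)) : a * b = 0 ↔ a ≠ b := by
  decide +revert

/-- If `R` is a finite commutative ring and `I` is an ideal with `R/I ≅ ℤ/2 × ℤ/2` and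
`|I| = t`, then `Γ_I(R) ≅ K_{t,t}`. -/
theorem stmt_12 (R : Type*) [CommRing R] [Finite R] (I : Ideal R)
    (e : (R ⧸ I) ≃+* ZMod 2 × ZMod 2) (t : ℕ) (ht : Nat.card I = t) :
    Nonempty (GammaI R I ≃g completeBipartiteGraph (Fin t) (Fin t)) := by
  classical
  set f := e.toRingHom.comp (Ideal.Quotient.mk I)
  have hf : Function.Surjective f := e.surjective.comp Ideal.Quotient.mk_surjective
  have hker : RingHom.ker f = I := by
    ext x
    simp [f, RingHom.mem_ker, Ideal.Quotient.eq_zero_iff_mem]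
  have hV (v : zdvSet R I) : f v = (1, 0) ∨ f v = (0, 1) :=
    (ZMod.two_prod_ne_zero_and_exists_mul_eq_zero_iff _).1
      ((mem_zdvSet_iff_of_surjective hf hker).1 v.2)
  have hq (v : zdvSet R I) : ¬f v = (1, 0) ↔ f v = (0, 1) := by
    rcases hV v with h | h <;> simp [h]
  have hadj (u v : zdvSet R I) : (GammaI R I).Adj u v ↔ ¬(f u = (1, 0) ↔ f v = (1, 0)) := by
    rw [gammaI_adj_iff_of_ker_eq hker, ZMod.two_prod_mul_eq_zero_iff (hV u) (hV v),
      and_iff_right_of_imp fun hne huv => hne (congrArg (f ∘ Subtype.val) huv)]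
    rcases hV u with hu | hu <;> rcases hV v with hv | hv <;> simp [hu, hv]
  have part (s : ZMod 2 × ZMod 2) (hs : s = (1, 0) ∨ s = (0, 1)) :
      {v : zdvSet R I // f v = s} ≃ Fin t :=
    (Equiv.subtypeSubtypeEquivSubtype fun hx => (mem_zdvSet_iff_of_surjective hf hker).2
      ((ZMod.two_prod_ne_zero_and_exists_mul_eq_zero_iff _).2 (hx ▸ hs))).trans
      (Finite.equivFinOfCardEq ((f.natCard_preimage_singleton hf s).trans (hker ▸ ht)))
  exact ⟨(isoCompleteBipartiteGraphOfAdjIff _ _ hadj).trans <| completeBipartiteGraphCongr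
    (part _ (.inl rfl)) ((Equiv.subtypeEquivRight hq).trans (part _ (.inr rfl)))⟩
end

section
/- Let R be a finite commutative ring and I an ideal with R/I ≅ ℤ/4 (or R/I ≅ (ℤ/2)[x]/(x²)) and |I| = t. Then Γ_I(R) is isomorphic to the complete graph K_t. -/
open SimpleGraph

/-!
`R ⧸ I` has exactly one nonzero zero-divisor `u`, and `u² = 0`: it is `2` in `ℤ/4` and `x̄` in
`𝔽₂[x]/(x²)`, the other nonzero elements `1` and `1 + u` being units. Hence the vertices of
`Γ_I(R)` are exactly the elements of the coset `u` of `I`, any two of them multiply into `I`,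
and `Γ_I(R)` is the complete graph on `|I|` vertices.
-/

open Polynomial

def IsUniqueZeroDivisor {S : Type*} [CommRing S] (u : S) : Prop :=
  u ≠ 0 ∧ u * u = 0 ∧ ∀ a b : S, a ≠ 0 → b ≠ 0 → a * b = 0 → a = u

namespace IsUniqueZeroDivisor

variable {S T : Type*} [CommRing S] [CommRing T]

theorem of_injective {f : S →+* T} (hf : Function.Injective f) {u : S}
    (h : IsUniqueZeroDivisor (f u)) : IsUniqueZeroDivisor u := by
  obtain ⟨hu0, huu, huniq⟩ := h
  refine ⟨fun h0 => hu0 (by rw [h0, map_zero]), hf (by rw [map_mul, huu, map_zero]), ?_⟩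
  intro a b ha hb hab
  exact hf (huniq (f a) (f b) ((map_ne_zero_iff f hf).mpr ha) ((map_ne_zero_iff f hf).mpr hb)
    (by rw [← map_mul, hab, map_zero]))

theorem of_forall_eq {u : S} (hu0 : u ≠ 0) (huu : u * u = 0)
    (hS : ∀ a : S, a = 0 ∨ a = 1 ∨ a = u ∨ a = 1 + u) : IsUniqueZeroDivisor u := by
  refine ⟨hu0, huu, fun a b ha hb hab => ?_⟩
  have hunit : IsUnit (1 + u) := IsNilpotent.isUnit_one_add ⟨2, by rw [sq, huu]⟩
  rcases hS a with rfl | rfl | rfl | rfl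
  · exact (ha rfl).elim
  · exact absurd (one_mul b ▸ hab) hb
  · rfl
  · exact absurd ((hunit.mul_right_eq_zero).mp hab) hb

theorem ringEquiv_symm (f : S ≃+* T) {v : T} (h : IsUniqueZeroDivisor v) :
    IsUniqueZeroDivisor (f.symm v) :=
  of_injective (f := f.toRingHom) f.injective (by simpa using h)

end IsUniqueZeroDivisor

theorem ZMod.isUniqueZeroDivisor_two : IsUniqueZeroDivisor (2 : ZMod 4) := by
  unfold IsUniqueZeroDivisor; decide

namespace AdjoinRoot

theorem exists_eq_of_add_of_mul_root_X_sq {k : Type*} [CommRing k]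
    (x : AdjoinRoot (X ^ 2 : k[X])) : ∃ a b : k, x = of _ a + of _ b * root _ := by
  induction x using AdjoinRoot.induction_on with | ih p => ?_
  refine ⟨p.coeff 0, p.coeff 1, ?_⟩
  rw [of, root, RingHom.comp_apply, RingHom.comp_apply, ← map_mul, ← map_add, mk_eq_mk,
    X_pow_dvd_iff]
  intro d hd
  interval_cases d <;> simp

theorem isUniqueZeroDivisor_root_X_sq : IsUniqueZeroDivisor (root (X ^ 2 : (ZMod 2)[X])) := by
  refine .of_forall_eq ?_ ?_ fun x => ?_
  · rw [Ne, root, mk_eq_zero, X_pow_dvd_iff]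
    push Not
    exact ⟨1, one_lt_two, by simp⟩
  · rw [← sq, ← mk_X, ← map_pow, mk_self]
  · obtain ⟨a, b, rfl⟩ := exists_eq_of_add_of_mul_root_X_sq x
    have hZ2 (c : ZMod 2) : c = 0 ∨ c = 1 := by decide +revert
    rcases hZ2 a with rfl | rfl <;> rcases hZ2 b with rfl | rfl <;> simp

end AdjoinRoot

section
variable {R : Type*} [CommRing R]

theorem Ideal.Quotient.card_preimage_mk (I : Ideal R) (a : R ⧸ I) :
    Nat.card (Ideal.Quotient.mk I ⁻¹' {a}) = Nat.card I := by
  calc Nat.card (Ideal.Quotient.mk I ⁻¹' {a})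
      = Nat.card (I.toAddSubgroup × ({a} : Set (R ⧸ I))) :=
        Nat.card_congr (QuotientAddGroup.preimageMkEquivAddSubgroupProdSet _ _)
    _ = Nat.card I := by
        rw [Nat.card_prod, Nat.card_of_subsingleton (⟨a, rfl⟩ : ({a} : Set (R ⧸ I))), mul_one]
        rfl

variable {I : Ideal R} {u : R ⧸ I}

theorem zdvSet_eq_preimage (hu : IsUniqueZeroDivisor u) :
    zdvSet R I = Ideal.Quotient.mk I ⁻¹' {u} := by
  obtain ⟨hu0, huu, huniq⟩ := hu
  ext x
  simp only [zdvSet, Set.mem_ofPred_eq, Set.mem_preimage, Set.mem_singleton_iff,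
    ← Ideal.Quotient.eq_zero_iff_mem, map_mul]
  constructor
  · rintro ⟨hx, y, hy, hxy⟩
    exact huniq _ _ hx hy hxy
  · rintro hx
    obtain ⟨y, rfl⟩ := Ideal.Quotient.mk_surjective u
    exact ⟨hx ▸ hu0, y, hu0, hx ▸ huu⟩

theorem gammaI_eq_top (hu : IsUniqueZeroDivisor u) : GammaI R I = ⊤ := by
  ext x y
  have hmem (z : zdvSet R I) : Ideal.Quotient.mk I z = u := by
    simpa [zdvSet_eq_preimage hu] using z.2
  simp only [GammaI, top_adj, and_iff_left_iff_imp]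
  intro _
  rw [← Ideal.Quotient.eq_zero_iff_mem, map_mul, hmem, hmem, hu.2.1]

end

/-- If `R` is a finite commutative ring and `I` an ideal with `R/I ≅ ℤ/4` or
`R/I ≅ (ℤ/2)[x]/(x²)`, and `|I| = t`, then `Γ_I(R) ≅ K_t`. -/
theorem stmt_14 (R : Type*) [CommRing R] [Finite R] (I : Ideal R)
    (e : Nonempty ((R ⧸ I) ≃+* ZMod 4) ∨
      Nonempty ((R ⧸ I) ≃+*
        (Polynomial (ZMod 2) ⧸ Ideal.span {(Polynomial.X : Polynomial (ZMod 2)) ^ 2})))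
    (t : ℕ) (ht : Nat.card I = t) :
    Nonempty (GammaI R I ≃g completeGraph (Fin t)) := by
  obtain ⟨u, hu⟩ : ∃ u : R ⧸ I, IsUniqueZeroDivisor u := by
    rcases e with ⟨⟨f⟩⟩ | ⟨⟨f⟩⟩
    · exact ⟨_, ZMod.isUniqueZeroDivisor_two.ringEquiv_symm f⟩
    -- `AdjoinRoot f` is by definition `k[X] ⧸ span {f}`
    · exact ⟨_, AdjoinRoot.isUniqueZeroDivisor_root_X_sq.ringEquiv_symm f⟩
  have hcard : Nat.card (zdvSet R I) = t := by
    rw [zdvSet_eq_preimage hu, Ideal.Quotient.card_preimage_mk, ht]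
  rw [gammaI_eq_top hu, ← completeGraph_eq_top]
  exact ⟨Iso.completeGraph (Finite.equivFinOfCardEq hcard)⟩
end

section
/- Let I be a radical ideal of a commutative ring R with minimal primary decomposition I = p_1 ∩ ... ∩ p_n where each p_i is a prime ideal and the decomposition is irredundant (no p_i contains the intersection of the others). Then the clique number of Γ_I(R) equals n, provided n ≥ 2. -/
open SimpleGraph

open Finset

/-!
A vertex `a` of `Γ_I(R)` lies outside `I = ⋂ pᵢ`, so `a ∉ p_{f a}` for some index `f a`. Two distinct
vertices `a, b` of a clique have `ab ∈ I ⊆ p_{f a}`, so `f a = f b` would contradict primality: `f` is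
injective on cliques, and cliques have at most `n` elements. Conversely, irredundance gives
`xᵢ ∈ ⋂_{j ≠ i} pⱼ \ pᵢ`; then `xᵢ xⱼ ∈ I` for `i ≠ j`, and since `n ≥ 2` the `xᵢ` are `n` distinct
vertices forming a clique.
-/

lemma SimpleGraph.cliqueNum_eq_of_forall_card_le {α : Type*} {G : SimpleGraph α} {N : ℕ}
    (hle : ∀ s : Finset α, G.IsClique (s : Set α) → #s ≤ N) (hex : ∃ s, G.IsNClique N s) :
    G.cliqueNum = N := by
  refine le_antisymm ?_ ?_
  · obtain ⟨s, hs⟩ := G.exists_isNClique_cliqueNum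
    exact hs.card_eq ▸ hle s hs.isClique
  · refine le_csSup ⟨N, ?_⟩ hex
    rintro m ⟨s, hs⟩
    exact hs.card_eq ▸ hle s hs.isClique

namespace GammaI

variable {R : Type*} [CommRing R] {I : Ideal R} {ι : Type*} {p : ι → Ideal R}

lemma card_le_of_isClique [Fintype ι] (hprime : ∀ i, (p i).IsPrime) (hdec : I = ⨅ i, p i)
    {s : Finset (zdvSet R I)} (hs : (GammaI R I).IsClique (s : Set (zdvSet R I))) :
    #s ≤ Fintype.card ι := by
  have hout : ∀ a : zdvSet R I, ∃ i, (a : R) ∉ p i := by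
    intro a
    by_contra! h
    exact a.2.1 (hdec ▸ Submodule.mem_iInf _ |>.mpr h)
  choose f hf using hout
  have hinj : Set.InjOn f s := by
    intro a ha b hb hfab
    by_contra hab
    have hmem : (a : R) * b ∈ p (f a) := hdec ▸ iInf_le p (f a) <| (hs ha hb hab).2
    rcases (hprime (f a)).mem_or_mem hmem with h | h
    · exact hf a h
    · exact hf b (hfab ▸ h)
  exact card_le_card_of_injOn f (fun a _ => mem_coe.mpr (mem_univ _)) hinj

lemma exists_isNClique [Fintype ι] [Nontrivial ι] (hdec : I = ⨅ i, p i)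
    (hirr : ∀ i, ¬ (⨅ j : {j // j ≠ i}, p j) ≤ p i) :
    ∃ s, (GammaI R I).IsNClique (Fintype.card ι) s := by
  have hsep : ∀ i, ∃ x : R, (∀ j, j ≠ i → x ∈ p j) ∧ x ∉ p i := by
    intro i
    obtain ⟨x, hx, hxi⟩ := SetLike.not_le_iff_exists.mp (hirr i)
    exact ⟨x, fun j hj => Submodule.mem_iInf _ |>.mp hx ⟨j, hj⟩, hxi⟩
  choose x hxmem hxnot using hsep
  have hxI : ∀ i, x i ∉ I := fun i h => hxnot i (hdec ▸ iInf_le p i <| h)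
  have hmul : ∀ i j, i ≠ j → x i * x j ∈ I := by
    intro i j hij
    rw [hdec, Submodule.mem_iInf]
    intro k
    obtain rfl | hk := eq_or_ne k i
    · exact Ideal.mul_mem_left _ _ (hxmem j k hij)
    · exact Ideal.mul_mem_right _ _ (hxmem i k hk)
  have hvert : ∀ i, x i ∈ zdvSet R I := by
    intro i
    obtain ⟨j, hj⟩ := exists_ne i
    exact ⟨hxI i, x j, hxI j, hmul i j hj.symm⟩
  let v : ι → zdvSet R I := fun i => ⟨x i, hvert i⟩
  have hv : Function.Injective v := by
    intro i j hij
    by_contra hne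
    have hxij : x i = x j := congrArg Subtype.val hij
    exact hxnot i (hxij ▸ hxmem j i hne)
  refine ⟨univ.map ⟨v, hv⟩, ?_, by simp⟩
  simp only [coe_map, coe_univ, Set.image_univ, Function.Embedding.coeFn_mk]
  rintro _ ⟨i, rfl⟩ _ ⟨j, rfl⟩ hne
  exact ⟨hne, hmul i j fun h => hne (h ▸ rfl)⟩

end GammaI

theorem stmt_17_general (R : Type*) [CommRing R] (I : Ideal R)
    (n : ℕ) (hn : 2 ≤ n) (p : Fin n → Ideal R)
    (hprime : ∀ i, (p i).IsPrime)
    (hdec : I = ⨅ i, p i)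
    (hirr : ∀ i : Fin n, ¬ (⨅ j : {j : Fin n // j ≠ i}, p j) ≤ p i) :
    (GammaI R I).cliqueNum = n := by
  have : Nontrivial (Fin n) := Fin.nontrivial_iff_two_le.mpr hn
  rw [← Fintype.card_fin n]
  exact cliqueNum_eq_of_forall_card_le (fun _ hs => GammaI.card_le_of_isClique hprime hdec hs)
    (GammaI.exists_isNClique hdec hirr)

/-- If `I` is a radical ideal of `R` with an irredundant decomposition
`I = p₁ ∩ ⋯ ∩ pₙ` into prime ideals (`n ≥ 2`), then the clique number of `Γ_I(R)`
is `n`. -/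
theorem stmt_17 (R : Type*) [CommRing R] (I : Ideal R) (hrad : I.radical = I)
    (n : ℕ) (hn : 2 ≤ n) (p : Fin n → Ideal R)
    (hprime : ∀ i, (p i).IsPrime)
    (hdec : I = ⨅ i, p i)
    (hirr : ∀ i : Fin n, ¬ (⨅ j : {j : Fin n // j ≠ i}, p j) ≤ p i) :
    (GammaI R I).cliqueNum = n :=
  stmt_17_general R I n hn p hprime hdec hirr
end
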